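/- Fix N ≥ 2 and a function F : (0,∞) → ℝ. Let z : ℝ → ℂ^N be a differentiable curve whose components z_1(t),…,z_N(t) are pairwise distinct for every t and which solves the asymptotic vortex equations. Then the relative moment t ↦ Σ_r Σ_{s≠r} |z_r(t) − z_s(t)|² is constant in t. -/

import Mathlib

open Finset ComplexConjugate
open scoped InnerProductSpace

/-!
Writing the relative moment as `2 (N Σ_r |z_r|² - |Σ_r z_r|²)`, it suffices that the centre of
vorticity `Σ_r z_r` and the angular impulse `Σ_r |z_r|²` are conserved. Because the coupling
`F |z_r - z_s|` is symmetric in `r, s`, the velocities sum to zero, and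
`Σ_r ⟪z_r, ż_r⟫ = -Im Σ_{r,s} F |z_r - z_s| conj z_r (z_r - z_s)` vanishes since symmetrizing
turns that double sum into the real number `½ Σ_{r,s} F |z_r - z_s| |z_r - z_s|²`.
-/

theorem Finset.sum_sum_eq_zero_of_antisymm {ι R : Type*} [Ring R] [NoZeroDivisors R] [CharZero R]
    (s : Finset ι) (f : ι → ι → R) (hf : ∀ i j, f i j = -f j i) :
    ∑ i ∈ s, ∑ j ∈ s, f i j = 0 := by
  refine CharZero.eq_neg_self_iff.mp ?_
  calc ∑ i ∈ s, ∑ j ∈ s, f i j = ∑ j ∈ s, ∑ i ∈ s, -f j i := by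
        rw [sum_comm]; simp only [← hf]
    _ = -∑ i ∈ s, ∑ j ∈ s, f i j := by simp only [sum_neg_distrib]

theorem Finset.sum_sum_norm_sub_sq {ι E : Type*} [NormedAddCommGroup E] [InnerProductSpace ℝ E]
    (s : Finset ι) (x : ι → E) :
    ∑ i ∈ s, ∑ j ∈ s, ‖x i - x j‖ ^ 2 = 2 * (#s * ∑ i ∈ s, ‖x i‖ ^ 2 - ‖∑ i ∈ s, x i‖ ^ 2) := by
  simp only [norm_sub_sq_real, sum_add_distrib, sum_sub_distrib, ← mul_sum, ← inner_sum,
    ← sum_inner, real_inner_self_eq_norm_sq, sum_const, nsmul_eq_mul]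
  ring

theorem eq_of_hasDerivAt_zero {E : Type*} [NormedAddCommGroup E] [NormedSpace ℝ E] {f : ℝ → E}
    (hf : ∀ t, HasDerivAt f 0 t) (t t' : ℝ) : f t = f t' :=
  is_const_of_deriv_eq_zero (fun t => (hf t).differentiableAt) (fun t => (hf t).deriv) t t'

section VortexVelocity

variable {ι : Type*} [Fintype ι]

def vortexVelocity (c : ι → ι → ℝ) (w : ι → ℂ) (r : ι) : ℂ :=
  Complex.I * ∑ s, (c r s : ℂ) * (w r - w s)

variable {c : ι → ι → ℝ} (hc : ∀ r s, c r s = c s r) (w : ι → ℂ)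
include hc

theorem sum_vortexVelocity_eq_zero : ∑ r, vortexVelocity c w r = 0 := by
  simp only [vortexVelocity, ← mul_sum]
  rw [sum_sum_eq_zero_of_antisymm _ _ fun r s => by rw [hc r s]; ring, mul_zero]

theorem two_mul_sum_sum_conj_mul_sub :
    2 * ∑ r, ∑ s, (c r s : ℂ) * (conj (w r) * (w r - w s))
      = ((∑ r, ∑ s, c r s * Complex.normSq (w r - w s) : ℝ) : ℂ) := by
  have hswap : ∑ r, ∑ s, (c r s : ℂ) * (-conj (w s) * (w r - w s))
      = ∑ r, ∑ s, (c r s : ℂ) * (conj (w r) * (w r - w s)) := by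
    rw [sum_comm]
    refine sum_congr rfl fun r _ => sum_congr rfl fun s _ => ?_
    rw [hc]
    ring
  rw [two_mul]
  nth_rw 2 [← hswap]
  push_cast
  rw [← sum_add_distrib]
  refine sum_congr rfl fun r _ => ?_
  rw [← sum_add_distrib]
  refine sum_congr rfl fun s _ => ?_
  rw [Complex.normSq_eq_conj_mul_self, map_sub]
  ring

theorem sum_inner_vortexVelocity_eq_zero : ∑ r, ⟪w r, vortexVelocity c w r⟫_ℝ = 0 := by
  set S := ∑ r, ∑ s, (c r s : ℂ) * (conj (w r) * (w r - w s)) with hS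
  have hS_im : S.im = 0 := by
    have h := congrArg Complex.im (two_mul_sum_sum_conj_mul_sub hc w)
    rw [← hS, Complex.ofReal_im, Complex.mul_im, Complex.re_ofNat, Complex.im_ofNat, zero_mul,
      add_zero, mul_eq_zero] at h
    exact h.resolve_left two_ne_zero
  calc ∑ r, ⟪w r, vortexVelocity c w r⟫_ℝ = -S.im := by
        rw [Complex.im_sum, ← sum_neg_distrib]
        refine sum_congr rfl fun r _ => ?_
        have : vortexVelocity c w r * conj (w r)
            = Complex.I * ∑ s, (c r s : ℂ) * (conj (w r) * (w r - w s)) := by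
          simp only [vortexVelocity, mul_assoc, sum_mul, mul_sum]
          exact sum_congr rfl fun s _ => by ring
        rw [Complex.inner, this, Complex.I_mul_re]
    _ = 0 := by rw [hS_im, neg_zero]

end VortexVelocity

theorem relative_moment_conserved_general (N : ℕ) (F : ℝ → ℝ)
    (z : ℝ → Fin N → ℂ)
    (heq : ∀ (t : ℝ) (r : Fin N),
      HasDerivAt (fun τ => z τ r)
        (Complex.I * ∑ s ∈ univ.erase r,
          (F ‖z t r - z t s‖ : ℂ) * (z t r - z t s)) t) :
    ∀ t t' : ℝ,
      ∑ r, ∑ s ∈ univ.erase r, ‖z t r - z t s‖ ^ 2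
        = ∑ r, ∑ s ∈ univ.erase r, ‖z t' r - z t' s‖ ^ 2 := by
  set c : ℝ → Fin N → Fin N → ℝ := fun t r s => F ‖z t r - z t s‖
  have hc : ∀ t r s, c t r s = c t s r := fun t r s => by simp only [c, norm_sub_rev]
  have hv : ∀ t r, HasDerivAt (z · r) (vortexVelocity (c t) (z t) r) t := fun t r => by
    convert heq t r using 2
    rw [vortexVelocity, sum_erase univ (by simp)]
  have hcentre : ∀ t, HasDerivAt (fun τ => ∑ r, z τ r) 0 t := fun t =>
    (HasDerivAt.fun_sum (u := univ) fun r _ => hv t r).congr_deriv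
      (sum_vortexVelocity_eq_zero (hc t) _)
  have himpulse : ∀ t, HasDerivAt (fun τ => ∑ r, ‖z τ r‖ ^ 2) 0 t := fun t =>
    (HasDerivAt.fun_sum (u := univ) fun r _ => (hv t r).norm_sq).congr_deriv <| by
      rw [← mul_sum, sum_inner_vortexVelocity_eq_zero (hc t), mul_zero]
  have herase : ∀ (w : Fin N → ℂ) r, ∑ s ∈ univ.erase r, ‖w r - w s‖ ^ 2 = ∑ s, ‖w r - w s‖ ^ 2 :=
    fun w r => sum_erase _ (by simp)
  intro t t'
  simp only [herase, sum_sum_norm_sub_sq, eq_of_hasDerivAt_zero hcentre t t',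
    eq_of_hasDerivAt_zero himpulse t t']

/-- For `N` vortices with pairwise distinct positions solving the asymptotic
vortex equations, the relative moment `Σ_r Σ_{s≠r} |z_r − z_s|²` (the
leading-order form of the conserved quantity `Q`) is conserved. -/
theorem relative_moment_conserved (N : ℕ) (hN : 2 ≤ N) (F : ℝ → ℝ)
    (z : ℝ → Fin N → ℂ)
    (hdist : ∀ (t : ℝ) (r s : Fin N), r ≠ s → z t r ≠ z t s)
    (heq : ∀ (t : ℝ) (r : Fin N),
      HasDerivAt (fun τ => z τ r)
        (Complex.I * ∑ s ∈ univ.erase r,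
          (F ‖z t r - z t s‖ : ℂ) * (z t r - z t s)) t) :
    ∀ t t' : ℝ,
      ∑ r, ∑ s ∈ univ.erase r, ‖z t r - z t s‖ ^ 2
        = ∑ r, ∑ s ∈ univ.erase r, ‖z t' r - z t' s‖ ^ 2 :=
  relative_moment_conserved_general N F z heq
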